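/- Let E be a weakly idempotent complete exact category with enough projectives P. The assignments T ↦ (⊥₁(Fac T), Fac T) and (C, D) ↦ C ∩ D are mutually inverse bijections between the collection of support τ-tilting subcategories of E and the collection of τ-cotorsion pairs (C, D) of E such that D is a torsion class. Moreover, these bijections restrict to mutually inverse bijections between the collection of tilting subcategories of E and the collection of cotorsion pairs (C, D) of E such that D is a torsion class. -/

import Mathlib

open CategoryTheory CategoryTheory.Limits ZeroObject

namespace TauTilting

universe w v u

/-- A class of "conflations" (kernel–cokernel pairs) on an additive category,
the datum underlying an exact structure in the sense of Quillen. -/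
structure ConflationStruct (C : Type u) [Category.{v} C] [Preadditive C] where
  /-- `IsConflation f g` means that `X ↣ Y ↠ Z` given by `f, g` is a conflation. -/
  IsConflation : ∀ ⦃X Y Z : C⦄, (X ⟶ Y) → (Y ⟶ Z) → Prop

namespace ConflationStruct

variable {C : Type u} [Category.{v} C] [Preadditive C] (S : ConflationStruct C)

/-- A morphism is an inflation if it occurs as the first map of a conflation. -/
def IsInflation {X Y : C} (f : X ⟶ Y) : Prop :=
  ∃ (Z : C) (g : Y ⟶ Z), S.IsConflation f g

/-- A morphism is a deflation if it occurs as the second map of a conflation. -/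
def IsDeflation {Y Z : C} (g : Y ⟶ Z) : Prop :=
  ∃ (X : C) (f : X ⟶ Y), S.IsConflation f g

/-- Quillen's axioms for an exact structure: conflations are kernel-cokernel pairs,
the class of conflations is closed under isomorphisms, identities are inflations and
deflations, inflations and deflations are closed under composition, pushouts of
inflations along arbitrary morphisms exist and are inflations, and dually. -/
structure IsExactStructure : Prop where
  ker_coker : ∀ {X Y Z : C} {f : X ⟶ Y} {g : Y ⟶ Z}, S.IsConflation f g →
    ∃ w : f ≫ g = 0, Nonempty (IsLimit (KernelFork.ofι f w)) ∧
      Nonempty (IsColimit (CokernelCofork.ofπ g w))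
  iso_closed : ∀ {X X' Y Y' Z Z' : C} (eX : X' ≅ X) (eY : Y' ≅ Y) (eZ : Z' ≅ Z)
    {f : X ⟶ Y} {g : Y ⟶ Z}, S.IsConflation f g →
    S.IsConflation (eX.hom ≫ f ≫ eY.inv) (eY.hom ≫ g ≫ eZ.inv)
  id_inflation : ∀ X : C, S.IsInflation (𝟙 X)
  id_deflation : ∀ X : C, S.IsDeflation (𝟙 X)
  inflation_comp : ∀ {X Y Z : C} {f : X ⟶ Y} {g : Y ⟶ Z},
    S.IsInflation f → S.IsInflation g → S.IsInflation (f ≫ g)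
  deflation_comp : ∀ {X Y Z : C} {f : X ⟶ Y} {g : Y ⟶ Z},
    S.IsDeflation f → S.IsDeflation g → S.IsDeflation (f ≫ g)
  pushout_inflation : ∀ {X Y Z : C} (f : X ⟶ Y) (h : X ⟶ Z), S.IsInflation f →
    ∃ (W : C) (h' : Y ⟶ W) (f' : Z ⟶ W), IsPushout f h h' f' ∧ S.IsInflation f'
  pullback_deflation : ∀ {X Y Z : C} (g : X ⟶ Z) (h : Y ⟶ Z), S.IsDeflation g →
    ∃ (W : C) (h' : W ⟶ X) (g' : W ⟶ Y), IsPullback h' g' g h ∧ S.IsDeflation g'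

/-- An object `P` is projective relative to the exact structure: `Hom(P,-)` sends
conflations to short exact sequences, equivalently morphisms out of `P` lift along
deflations. -/
def IsProjObj (P : C) : Prop :=
  ∀ ⦃Y Z : C⦄ (g : Y ⟶ Z), S.IsDeflation g → ∀ u : P ⟶ Z, ∃ v : P ⟶ Y, v ≫ g = u

/-- The class of projective objects. -/
def projClass : Set C := {P | S.IsProjObj P}

/-- The exact category has enough projectives. -/
def HasEnoughProjectives : Prop :=
  ∀ X : C, ∃ (P : C) (p : P ⟶ X), S.IsProjObj P ∧ S.IsDeflation p

/-- `Fac T` : objects admitting a deflation from an object of `T`. -/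
def Fac (T : Set C) : Set C :=
  {X | ∃ (T' : C) (g : T' ⟶ X), T' ∈ T ∧ S.IsDeflation g}

/-- `Sub T` : objects admitting an inflation into an object of `T`. -/
def Sub (T : Set C) : Set C :=
  {X | ∃ (T' : C) (f : X ⟶ T'), T' ∈ T ∧ S.IsInflation f}

/-- `Ext¹(X, Y) = 0`, expressed by the splitting of all conflations `Y ↣ E ↠ X`. -/
def ext1Zero (X Y : C) : Prop :=
  ∀ (E : C) (f : Y ⟶ E) (g : E ⟶ X), S.IsConflation f g → ∃ s : X ⟶ E, s ≫ g = 𝟙 X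

/-- A morphism is admissible if it factors as a deflation followed by an inflation. -/
def IsAdmissible {X Y : C} (f : X ⟶ Y) : Prop :=
  ∃ (K : C) (d : X ⟶ K) (i : K ⟶ Y), S.IsDeflation d ∧ S.IsInflation i ∧ d ≫ i = f

end ConflationStruct

section Approx

variable {C : Type u} [Category.{v} C]

/-- `f : P ⟶ X` is a left `T`-approximation. -/
def LeftApprox (T : Set C) {P X : C} (f : P ⟶ X) : Prop :=
  X ∈ T ∧ ∀ (T' : C), T' ∈ T → ∀ u : P ⟶ T', ∃ v : X ⟶ T', f ≫ v = u

/-- `f : X ⟶ M` is a right `T`-approximation. -/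
def RightApprox (T : Set C) {X M : C} (f : X ⟶ M) : Prop :=
  X ∈ T ∧ ∀ (T' : C), T' ∈ T → ∀ u : T' ⟶ M, ∃ v : T' ⟶ X, v ≫ f = u

/-- A class of objects closed under direct summands. -/
def SummandClosed (T : Set C) : Prop :=
  ∀ {X Z : C}, Z ∈ T → ∀ (i : X ⟶ Z) (r : Z ⟶ X), i ≫ r = 𝟙 X → X ∈ T

end Approx

section Additive

variable {C : Type u} [Category.{v} C] [Preadditive C] [HasZeroObject C] [HasBinaryBiproducts C]

/-- An additively closed subcategory: closed under isomorphisms, finite direct sums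
and direct summands. -/
structure AdditivelyClosed (T : Set C) : Prop where
  mem_of_iso : ∀ {X Y : C}, (X ≅ Y) → X ∈ T → Y ∈ T
  zero_mem : (0 : C) ∈ T
  biprod_mem : ∀ {X Y : C}, X ∈ T → Y ∈ T → (X ⊞ Y) ∈ T
  summand_mem : SummandClosed T

/-- An object is indecomposable if it is nonzero and any biproduct decomposition is
trivial. -/
def IsIndecomposable (X : C) : Prop :=
  ¬ IsZero X ∧ ∀ (A B : C), (X ≅ A ⊞ B) → IsZero A ∨ IsZero B

/-- The cardinality of the set of isomorphism classes of indecomposable objects in `T`. -/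
noncomputable def numIndec (T : Set C) : Cardinal :=
  Cardinal.mk
    (Quot fun (X Y : {X : C // X ∈ T ∧ IsIndecomposable X}) => Nonempty ((X : C) ≅ (Y : C)))

end Additive

section AddOf

variable {C : Type u} [Category.{v} C] [Preadditive C] [HasFiniteBiproducts C]

/-- The additive closure of a class of objects : direct summands of finite direct
sums of its objects. -/
def addOf (X : Set C) : Set C :=
  {Y | ∃ (n : ℕ) (f : Fin n → C), (∀ j, f j ∈ X) ∧
    ∃ (i : Y ⟶ ⨁ f) (r : (⨁ f) ⟶ Y), i ≫ r = 𝟙 Y}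

/-- A Krull-Schmidt category: every object is a finite direct sum of objects with
local endomorphism ring. -/
def IsKrullSchmidt (C : Type u) [Category.{v} C] [Preadditive C] [HasFiniteBiproducts C] : Prop :=
  ∀ X : C, ∃ (n : ℕ) (f : Fin n → C), (∀ j, IsLocalRing (End (f j))) ∧ Nonempty (X ≅ ⨁ f)

end AddOf

namespace ConflationStruct

variable {C : Type u} [Category.{v} C] [Preadditive C] (S : ConflationStruct C)

section TauTilt

/-- The existence of an exact sequence `P → T⁰ ↠ T¹` with `T⁰, T¹ ∈ T` whose first
map is a left `T`-approximation; the exact sequence is encoded by the factorization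
of the first map as a deflation onto its image followed by an inflation which is a
kernel of the deflation `T⁰ ↠ T¹`. -/
def ApproxSeq (T : Set C) (P : C) : Prop :=
  ∃ (K T0 T1 : C) (d : P ⟶ K) (i : K ⟶ T0) (g : T0 ⟶ T1),
    T1 ∈ T ∧ S.IsDeflation d ∧ S.IsConflation i g ∧ LeftApprox T (d ≫ i)

variable [HasZeroObject C] [HasBinaryBiproducts C]

/-- A τ-rigid subcategory: additively closed with `Ext¹(T, Fac T) = 0`. -/
def IsTauRigid (T : Set C) : Prop :=
  AdditivelyClosed T ∧ ∀ T' ∈ T, ∀ X ∈ S.Fac T, S.ext1Zero T' X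

/-- A support τ-tilting subcategory. -/
def IsSupportTauTilting (T : Set C) : Prop :=
  S.IsTauRigid T ∧ ∀ P ∈ S.projClass, S.ApproxSeq T P

/-- Condition (A): every projective admits an admissible left `T`-approximation. -/
def CondA (T : Set C) : Prop :=
  ∀ P ∈ S.projClass, ∃ (T' : C) (f : P ⟶ T'), LeftApprox T f ∧ S.IsAdmissible f

end TauTilt

section Relative

/-- `g` is a deflation of the full exact subcategory supported on `D` (i.e. it is part
of a conflation all of whose terms belong to `D`; the source and target are recorded
separately where needed). -/
def DeflationIn (D : Set C) {Y Z : C} (g : Y ⟶ Z) : Prop :=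
  ∃ (X : C) (f : X ⟶ Y), X ∈ D ∧ S.IsConflation f g

/-- `P` is a projective object of the full exact subcategory supported on `D`. -/
def IsProjRel (D : Set C) (P : C) : Prop :=
  P ∈ D ∧ ∀ ⦃Y Z : C⦄ (g : Y ⟶ Z), Y ∈ D → Z ∈ D → S.DeflationIn D g →
    ∀ u : P ⟶ Z, ∃ v : P ⟶ Y, v ≫ g = u

/-- `Ext¹(X,Y) = 0` computed in the full exact subcategory supported on `D`. -/
def ext1ZeroRel (D : Set C) (X Y : C) : Prop :=
  ∀ (E : C) (f : Y ⟶ E) (g : E ⟶ X), E ∈ D → S.IsConflation f g →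
    ∃ s : X ⟶ E, s ≫ g = 𝟙 X

/-- `extSuccZeroRel S D n X Y` says `Ext^{n+1}(X, Y) = 0` in the full exact subcategory
supported on `D`, via dimension shifting along syzygies. -/
def extSuccZeroRel (D : Set C) : ℕ → C → C → Prop
  | 0 => fun X Y => S.ext1ZeroRel D X Y
  | (n+1) => fun X Y => ∀ (K P : C) (i : K ⟶ P) (p : P ⟶ X),
      K ∈ D → S.IsProjRel D P → S.IsConflation i p → extSuccZeroRel D n K Y

/-- `Ext^{n+1}(X,Y) = 0` in the ambient exact category. -/
def extSuccZero (n : ℕ) (X Y : C) : Prop := S.extSuccZeroRel Set.univ n X Y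

end Relative

section Tilting

variable [HasZeroObject C] [HasBinaryBiproducts C]

/-- A (1-)tilting subcategory of the ambient exact category (with enough projectives):
additively closed, self-orthogonal for all `Ext^i`, `i ≥ 1`, of projective dimension at
most one, and every projective admits a conflation `P ↣ T⁰ ↠ T¹` with `T⁰, T¹ ∈ T`. -/
def IsTilting (T : Set C) : Prop :=
  AdditivelyClosed T ∧
  (∀ T1 ∈ T, ∀ T2 ∈ T, ∀ n : ℕ, S.extSuccZero n T1 T2) ∧
  (∀ T' ∈ T, ∀ Y : C, S.extSuccZero 1 T' Y) ∧
  (∀ P ∈ S.projClass, ∃ (T0 T1 : C) (f : P ⟶ T0) (g : T0 ⟶ T1),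
    T0 ∈ T ∧ T1 ∈ T ∧ S.IsConflation f g)

/-- A tilting subcategory of the full exact subcategory supported on `D` (whose
projectives are the relative projectives). -/
def IsTiltingRel (D T : Set C) : Prop :=
  AdditivelyClosed T ∧ T ⊆ D ∧
  (∀ T1 ∈ T, ∀ T2 ∈ T, ∀ n : ℕ, S.extSuccZeroRel D n T1 T2) ∧
  (∀ T' ∈ T, ∀ Y ∈ D, S.extSuccZeroRel D 1 T' Y) ∧
  (∀ P : C, S.IsProjRel D P → ∃ (T0 T1 : C) (f : P ⟶ T0) (g : T0 ⟶ T1),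
    T0 ∈ T ∧ T1 ∈ T ∧ S.IsConflation f g)

end Tilting

section Pairs

/-- `⊥₁ D`. -/
def perp1 (D : Set C) : Set C := {X | ∀ Y ∈ D, S.ext1Zero X Y}

/-- `T^⊥₀`. -/
def perp0 (T : Set C) : Set C := {Y | ∀ T' ∈ T, ∀ f : T' ⟶ Y, f = 0}

/-- A torsion class: closed under factor objects and extensions. -/
def IsTorsionClass (D : Set C) : Prop :=
  (∀ {X Y : C} (g : X ⟶ Y), X ∈ D → S.IsDeflation g → Y ∈ D) ∧
  (∀ {X Y Z : C} {f : X ⟶ Y} {g : Y ⟶ Z}, S.IsConflation f g → X ∈ D → Z ∈ D → Y ∈ D)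

/-- A torsion pair `(D, F)`. -/
def IsTorsionPair (D F : Set C) : Prop :=
  (∀ X ∈ D, ∀ Y ∈ F, ∀ f : X ⟶ Y, f = 0) ∧
  (∀ X : C, ∃ (D0 F0 : C) (i : D0 ⟶ X) (p : X ⟶ F0), D0 ∈ D ∧ F0 ∈ F ∧ S.IsConflation i p)

/-- A τ-cotorsion pair `(Cc, D)`. -/
def IsTauCotorsionPair (Cc D : Set C) : Prop :=
  Cc = S.perp1 D ∧
  ∀ P ∈ S.projClass, ∃ (K D0 C0 : C) (d : P ⟶ K) (i : K ⟶ D0) (g : D0 ⟶ C0),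
    D0 ∈ Cc ∧ D0 ∈ D ∧ C0 ∈ Cc ∧ S.IsDeflation d ∧ S.IsConflation i g ∧
    LeftApprox D (d ≫ i)

/-- A (complete) cotorsion pair `(Cc, D)`. -/
def IsCotorsionPair (Cc D : Set C) : Prop :=
  SummandClosed Cc ∧ SummandClosed D ∧
  (∀ X ∈ Cc, ∀ Y ∈ D, S.ext1Zero X Y) ∧
  (∀ X : C, ∃ (D0 C0 : C) (f : D0 ⟶ C0) (g : C0 ⟶ X),
    D0 ∈ D ∧ C0 ∈ Cc ∧ S.IsConflation f g) ∧
  (∀ X : C, ∃ (D1 C1 : C) (f : X ⟶ D1) (g : D1 ⟶ C1),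
    D1 ∈ D ∧ C1 ∈ Cc ∧ S.IsConflation f g)

/-- Admissibly contravariantly finite subcategory. -/
def IsACF (T : Set C) : Prop :=
  ∀ X : C, ∃ (T' : C) (f : T' ⟶ X), RightApprox T f ∧ S.IsAdmissible f

end Pairs

end ConflationStruct

/-- A weakly idempotent complete additive category: every section has a cokernel. -/
def WeaklyIdempotentComplete (C : Type u) [Category.{v} C] [Preadditive C] : Prop :=
  ∀ {X Y : C} (s : X ⟶ Y), (∃ r : Y ⟶ X, s ≫ r = 𝟙 X) → HasCokernel s


namespace ConflationStruct

variable {C : Type u} [Category.{v} C] [Preadditive C] (S : ConflationStruct C)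

section ET

/-- Membership in the ideal `I` of the category of projectives: morphisms `f`
between projectives with `Hom(f, T') = 0` for all `T' ∈ T`. -/
def memIdeal (T : Set C) {Q Q' : C} (f : Q ⟶ Q') : Prop :=
  S.IsProjObj Q ∧ S.IsProjObj Q' ∧ ∀ T' ∈ T, ∀ g : Q' ⟶ T', f ≫ g = 0

/-- `A_T`: the objects killed by the ideal `I`. -/
def AT (T : Set C) : Set C :=
  {X | ∀ ⦃Q Q' : C⦄ (f : Q ⟶ Q'), S.memIdeal T f → ∀ h : Q' ⟶ X, f ≫ h = 0}

/-- The conflation structure induced on a full subcategory: conflations of the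
ambient category all of whose terms lie in the subcategory. -/
def structOn (D : Set C) : ConflationStruct (ObjectProperty.FullSubcategory (fun X : C => X ∈ D)) :=
  ⟨fun _ _ _ f g => S.IsConflation f.hom g.hom⟩

variable [HasFiniteBiproducts C]

/-- `P_T`: additive closure of the images of admissible left `T`-approximations of
projectives. -/
def PTset (T : Set C) : Set C :=
  addOf {K | ∃ (Q T0 : C) (d : Q ⟶ K) (i : K ⟶ T0),
    S.IsProjObj Q ∧ S.IsDeflation d ∧ S.IsInflation i ∧ LeftApprox T (d ≫ i)}

end ET

section NTilting

/-- `T^⊥ = {Y | Ext^i(T', Y) = 0  for all i ≥ 1, T' ∈ T}`. -/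
def rperp (T : Set C) : Set C :=
  {Y | ∀ T' ∈ T, ∀ n : ℕ, S.extSuccZero n T' Y}

/-- `Cores S D n X` : `X` admits an exact sequence
`X ↣ Y₀ → ⋯ → Y_{n-1} ↠ Y_n` with all `Yᵢ ∈ D`. -/
def Cores (D : Set C) : ℕ → C → Prop
  | 0 => fun X => X ∈ D
  | (n+1) => fun X => ∃ (Y K : C) (i : X ⟶ Y) (p : Y ⟶ K),
      Y ∈ D ∧ S.IsConflation i p ∧ Cores D n K

/-- An `n`-tilting subcategory in the sense of Sauter: `T^⊥` has enough projectives
given by `T`, and every object has a `T^⊥`-coresolution of length `n`. -/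
def IsNTilting (T : Set C) (n : ℕ) : Prop :=
  T ⊆ S.rperp T ∧
  (∀ T' ∈ T, ∀ Y ∈ S.rperp T, S.ext1Zero T' Y) ∧
  (∀ Y ∈ S.rperp T, ∃ (K T' : C) (i : K ⟶ T') (p : T' ⟶ Y),
    T' ∈ T ∧ K ∈ S.rperp T ∧ S.IsConflation i p) ∧
  (∀ X : C, S.Cores (S.rperp T) n X)

/-- `P^{<∞}`: objects of finite projective dimension. -/
def Pfin : Set C := {X | ∃ n : ℕ, ∀ Y : C, S.extSuccZero n X Y}

end NTilting

section TauObj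

variable [HasZeroObject C] [HasBinaryBiproducts C]

/-- Variant of `ApproxSeq` where the left approximation is required to be nonzero. -/
def ApproxSeqNonzero (T : Set C) (P : C) : Prop :=
  ∃ (K T0 T1 : C) (d : P ⟶ K) (i : K ⟶ T0) (g : T0 ⟶ T1),
    T1 ∈ T ∧ S.IsDeflation d ∧ S.IsConflation i g ∧ LeftApprox T (d ≫ i) ∧ d ≫ i ≠ 0

/-- A τ-tilting subcategory: support τ-tilting such that every nonzero projective
admits a nonzero such approximation sequence. -/
def IsTauTiltingSubcat (T : Set C) : Prop :=
  S.IsSupportTauTilting T ∧ ∀ P ∈ S.projClass, ¬ IsZero P → S.ApproxSeqNonzero T P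

end TauObj

end ConflationStruct

section K0

variable {C : Type u} [Category.{v} C] [Preadditive C]

/-- Relations for the Grothendieck group of an exact subcategory: conflation
relations together with isomorphism relations. -/
def K0ExRels (S : ConflationStruct C) (D : Set C) :
    Set (FreeAbelianGroup {X : C // X ∈ D}) :=
  {x | (∃ (A B E : {X : C // X ∈ D}) (f : (A : C) ⟶ (B : C)) (g : (B : C) ⟶ (E : C)),
          S.IsConflation f g ∧
          x = FreeAbelianGroup.of B - FreeAbelianGroup.of A - FreeAbelianGroup.of E) ∨
       (∃ (A B : {X : C // X ∈ D}), Nonempty ((A : C) ≅ (B : C)) ∧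
          x = FreeAbelianGroup.of A - FreeAbelianGroup.of B)}

/-- The Grothendieck group of the full exact subcategory supported on `D`. -/
def K0Ex (S : ConflationStruct C) (D : Set C) :=
  FreeAbelianGroup {X : C // X ∈ D} ⧸ AddSubgroup.closure (K0ExRels S D)

noncomputable instance (S : ConflationStruct C) (D : Set C) : AddCommGroup (K0Ex S D) :=
  QuotientAddGroup.Quotient.addCommGroup _

variable [HasBinaryBiproducts C]

/-- Relations for the split Grothendieck group of an additive subcategory. -/
def K0SplitRels (T : Set C) : Set (FreeAbelianGroup {X : C // X ∈ T}) :=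
  {x | (∃ (A B E : {X : C // X ∈ T}), Nonempty ((E : C) ≅ (A : C) ⊞ (B : C)) ∧
          x = FreeAbelianGroup.of E - FreeAbelianGroup.of A - FreeAbelianGroup.of B) ∨
       (∃ (A B : {X : C // X ∈ T}), Nonempty ((A : C) ≅ (B : C)) ∧
          x = FreeAbelianGroup.of A - FreeAbelianGroup.of B)}

/-- The split Grothendieck group of the additive subcategory supported on `T`. -/
def K0Split (T : Set C) :=
  FreeAbelianGroup {X : C // X ∈ T} ⧸ AddSubgroup.closure (K0SplitRels T)

noncomputable instance (T : Set C) : AddCommGroup (K0Split T) :=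
  QuotientAddGroup.Quotient.addCommGroup _

end K0

end TauTilting

/-!
`Fac T` is closed under extensions because τ-rigidity splits the conflations obtained by pulling
back along deflations from `T`. An object `X` of `Fac T` is the target of a conflation `U ↣ V ↠ X`
with `V ∈ T` and `U ∈ Fac T`: push the approximation sequence `Q ↠ K ↣ T⁰ ↠ T¹` of a projective
cover `Q` of `Y = ker (T' ↠ X)` out along the induced deflation `K ↠ Y`, and then along `Y ↣ T'`;
the middle term is `T' ⊕ T¹`. If moreover `X ∈ ⊥₁ (Fac T)` this conflation splits, so `X ∈ T`.
Conversely, for a τ-cotorsion pair `(C, D)` with `D` a torsion class, the left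
`D`-approximations of projectives exhibit every object of `D` as a factor object of `C ∩ D`,
since in a weakly idempotent complete exact category `g` is a deflation as soon as `f ≫ g` is.

A tilting subcategory is τ-rigid because `pd T ≤ 1` lets maps from syzygies of `T` lift along
deflations `T₀ ↠ X`; pushing the conflations `P ↣ T⁰ ↠ T¹` along projective covers gives the two
approximation conflations of the cotorsion pair. Conversely, for a cotorsion pair `(C, D)` with
`D` a torsion class, syzygies of objects of `C` are Ext-projective, whence `pd (C ∩ D) ≤ 1`.
-/

namespace TauTilting

theorem WeaklyIdempotentComplete.exists_iso_biprod_of_section {C : Type*} [Category C]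
    [Preadditive C] [HasBinaryBiproducts C] (hW : WeaklyIdempotentComplete C) {X Y : C}
    {σ : X ⟶ Y} {ρ : Y ⟶ X} (h : σ ≫ ρ = 𝟙 X) :
    ∃ (Q : C) (e : Y ≅ X ⊞ Q), σ ≫ e.hom = biprod.inl ∧ e.hom ≫ biprod.fst = ρ := by
  have := hW σ ⟨ρ, h⟩
  have hσ : σ ≫ (𝟙 Y - ρ ≫ σ) = 0 := by simp [Preadditive.comp_sub, reassoc_of% h]
  have hπι : cokernel.π σ ≫ cokernel.desc σ _ hσ = 𝟙 Y - ρ ≫ σ := cokernel.π_desc _ _ _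
  refine ⟨cokernel σ,
    { hom := biprod.lift ρ (cokernel.π σ)
      inv := biprod.desc σ (cokernel.desc σ _ hσ)
      hom_inv_id := by simp [hπι]
      inv_hom_id := by ext <;> simp [h] }, by ext <;> simp [h], by simp⟩

namespace ConflationStruct

variable {C : Type*} [Category C] [Preadditive C] {S : ConflationStruct C} {X Y Z W : C}

theorem IsConflation.isInflation {f : X ⟶ Y} {g : Y ⟶ Z} (h : S.IsConflation f g) :
    S.IsInflation f :=
  ⟨Z, g, h⟩

theorem IsConflation.isDeflation {f : X ⟶ Y} {g : Y ⟶ Z} (h : S.IsConflation f g) :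
    S.IsDeflation g :=
  ⟨X, f, h⟩

namespace IsExactStructure

theorem comp_eq_zero (hS : S.IsExactStructure) {f : X ⟶ Y} {g : Y ⟶ Z}
    (h : S.IsConflation f g) : f ≫ g = 0 :=
  (hS.ker_coker h).choose

theorem exists_lift (hS : S.IsExactStructure) {f : X ⟶ Y} {g : Y ⟶ Z}
    (h : S.IsConflation f g) {t : W ⟶ Y} (ht : t ≫ g = 0) : ∃ u : W ⟶ X, u ≫ f = t := by
  obtain ⟨_, ⟨hk⟩, -⟩ := hS.ker_coker h
  obtain ⟨u, hu⟩ := KernelFork.IsLimit.lift' hk t ht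
  exact ⟨u, hu⟩

theorem exists_desc (hS : S.IsExactStructure) {f : X ⟶ Y} {g : Y ⟶ Z}
    (h : S.IsConflation f g) {t : Y ⟶ W} (ht : f ≫ t = 0) : ∃ u : Z ⟶ W, g ≫ u = t := by
  obtain ⟨_, -, ⟨hc⟩⟩ := hS.ker_coker h
  obtain ⟨u, hu⟩ := CokernelCofork.IsColimit.desc' hc t ht
  exact ⟨u, hu⟩

theorem cancel_inflation (hS : S.IsExactStructure) {f : X ⟶ Y} (hf : S.IsInflation f)
    {u v : W ⟶ X} (huv : u ≫ f = v ≫ f) : u = v := by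
  obtain ⟨_, _, h⟩ := hf
  obtain ⟨_, ⟨hk⟩, -⟩ := hS.ker_coker h
  exact Fork.IsLimit.hom_ext hk huv

theorem cancel_deflation (hS : S.IsExactStructure) {g : Y ⟶ Z} (hg : S.IsDeflation g)
    {u v : Z ⟶ W} (huv : g ≫ u = g ≫ v) : u = v := by
  obtain ⟨_, _, h⟩ := hg
  obtain ⟨_, -, ⟨hc⟩⟩ := hS.ker_coker h
  exact Cofork.IsColimit.hom_ext hc huv

theorem isConflation_of_iso_left (hS : S.IsExactStructure) (e : W ≅ X) {f : X ⟶ Y}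
    {g : Y ⟶ Z} (h : S.IsConflation f g) : S.IsConflation (e.hom ≫ f) g := by
  simpa using hS.iso_closed e (Iso.refl Y) (Iso.refl Z) h

theorem isConflation_of_iso_right (hS : S.IsExactStructure) (e : W ≅ Z) {f : X ⟶ Y}
    {g : Y ⟶ Z} (h : S.IsConflation f g) : S.IsConflation f (g ≫ e.inv) := by
  simpa using hS.iso_closed (Iso.refl X) (Iso.refl Y) e h

theorem isDeflation_iso_hom_comp (hS : S.IsExactStructure) (e : W ≅ Y) {g : Y ⟶ Z}
    (hg : S.IsDeflation g) : S.IsDeflation (e.hom ≫ g) := by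
  obtain ⟨X, f, h⟩ := hg
  exact ⟨X, f ≫ e.inv, by simpa using hS.iso_closed (Iso.refl X) e (Iso.refl Z) h⟩

theorem isInflation_comp_iso_hom (hS : S.IsExactStructure) {f : X ⟶ Y}
    (hf : S.IsInflation f) (e : Y ≅ W) : S.IsInflation (f ≫ e.hom) := by
  obtain ⟨Z, g, h⟩ := hf
  exact ⟨Z, e.inv ≫ g, by simpa using hS.iso_closed (Iso.refl X) e.symm (Iso.refl Z) h⟩

theorem isDeflation_of_iso (hS : S.IsExactStructure) (e : X ≅ Y) : S.IsDeflation e.hom := by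
  simpa using hS.isDeflation_iso_hom_comp e (hS.id_deflation Y)

theorem isConflation_of_isDeflation (hS : S.IsExactStructure) {g : Y ⟶ Z}
    (hg : S.IsDeflation g) {f : X ⟶ Y} (hw : f ≫ g = 0)
    (hmono : ∀ {W : C} {u v : W ⟶ X}, u ≫ f = v ≫ f → u = v)
    (hlift : ∀ {W : C} (t : W ⟶ Y), t ≫ g = 0 → ∃ u : W ⟶ X, u ≫ f = t) :
    S.IsConflation f g := by
  obtain ⟨L, k, hk⟩ := hg
  obtain ⟨a, ha⟩ := hlift k (hS.comp_eq_zero hk)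
  obtain ⟨b, hb⟩ := hS.exists_lift hk hw
  have hba : b ≫ a = 𝟙 X := hmono (by rw [Category.assoc, ha, hb, Category.id_comp])
  have hab : a ≫ b = 𝟙 L :=
    hS.cancel_inflation hk.isInflation (by rw [Category.assoc, hb, ha, Category.id_comp])
  simpa [hb] using hS.isConflation_of_iso_left ⟨b, a, hba, hab⟩ hk

theorem isConflation_of_isInflation (hS : S.IsExactStructure) {f : X ⟶ Y}
    (hf : S.IsInflation f) {g : Y ⟶ Z} (hw : f ≫ g = 0)
    (hepi : ∀ {W : C} {u v : Z ⟶ W}, g ≫ u = g ≫ v → u = v)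
    (hdesc : ∀ {W : C} (t : Y ⟶ W), f ≫ t = 0 → ∃ u : Z ⟶ W, g ≫ u = t) :
    S.IsConflation f g := by
  obtain ⟨Q, c, hc⟩ := hf
  obtain ⟨a, ha⟩ := hdesc c (hS.comp_eq_zero hc)
  obtain ⟨b, hb⟩ := hS.exists_desc hc hw
  have hab : a ≫ b = 𝟙 Z := hepi (by rw [← Category.assoc, ha, hb, Category.comp_id])
  have hba : b ≫ a = 𝟙 Q :=
    hS.cancel_deflation hc.isDeflation (by rw [← Category.assoc, hb, ha, Category.comp_id])
  simpa [hb] using hS.isConflation_of_iso_right (⟨a, b, hab, hba⟩ : Z ≅ Q) hc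

theorem isInflation_of_isPushout (hS : S.IsExactStructure) {f : X ⟶ Y} {h : X ⟶ Z}
    {h' : Y ⟶ W} {f' : Z ⟶ W} (hpo : IsPushout f h h' f') (hf : S.IsInflation f) :
    S.IsInflation f' := by
  obtain ⟨_, _, _, hpo', hf'⟩ := hS.pushout_inflation f h hf
  simpa using hS.isInflation_comp_iso_hom hf' (hpo'.isoIsPushout _ _ hpo)

theorem isDeflation_of_isPullback (hS : S.IsExactStructure) {g : X ⟶ Z} {h : Y ⟶ Z}
    {h' : W ⟶ X} {g' : W ⟶ Y} (hpb : IsPullback h' g' g h) (hg : S.IsDeflation g) :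
    S.IsDeflation g' := by
  obtain ⟨_, _, _, hpb', hg''⟩ := hS.pullback_deflation g h hg
  simpa using hS.isDeflation_iso_hom_comp (hpb.isoIsPullback _ _ hpb') hg''

theorem exists_isConflation_of_isPushout (hS : S.IsExactStructure) {f : X ⟶ Y} {g : Y ⟶ Z}
    (hfg : S.IsConflation f g) {Q : C} {h : X ⟶ W} {h' : Y ⟶ Q} {f' : W ⟶ Q}
    (hpo : IsPushout f h h' f') : ∃ w : Q ⟶ Z, S.IsConflation f' w ∧ h' ≫ w = g := by
  have hw : f ≫ g = h ≫ (0 : W ⟶ Z) := by rw [hS.comp_eq_zero hfg, comp_zero]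
  refine ⟨hpo.desc g 0 hw, hS.isConflation_of_isInflation
    (hS.isInflation_of_isPushout hpo hfg.isInflation) (hpo.inr_desc _ _ _) ?_ ?_,
    hpo.inl_desc _ _ _⟩
  · intro V u v huv
    refine hS.cancel_deflation hfg.isDeflation ?_
    rw [← hpo.inl_desc g 0 hw, Category.assoc, Category.assoc, huv]
  · intro V t ht
    obtain ⟨u, hu⟩ := hS.exists_desc hfg (t := h' ≫ t)
      (by rw [← Category.assoc, hpo.w, Category.assoc, ht, comp_zero])
    exact ⟨u, hpo.hom_ext (by rw [hpo.inl_desc_assoc, hu])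
      (by rw [hpo.inr_desc_assoc, zero_comp, ht])⟩

theorem exists_isPushout_isConflation (hS : S.IsExactStructure) {f : X ⟶ Y} {g : Y ⟶ Z}
    (hfg : S.IsConflation f g) (h : X ⟶ W) :
    ∃ (Q : C) (h' : Y ⟶ Q) (f' : W ⟶ Q) (w : Q ⟶ Z),
      IsPushout f h h' f' ∧ S.IsConflation f' w ∧ h' ≫ w = g := by
  obtain ⟨Q, h', f', hpo, -⟩ := hS.pushout_inflation f h hfg.isInflation
  obtain ⟨w, hw, hgw⟩ := hS.exists_isConflation_of_isPushout hfg hpo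
  exact ⟨Q, h', f', w, hpo, hw, hgw⟩

theorem exists_isConflation_of_isPullback (hS : S.IsExactStructure) {f : X ⟶ Y}
    {g : Y ⟶ Z} (hfg : S.IsConflation f g) {V : C} {h : W ⟶ Z} {h' : V ⟶ Y} {g' : V ⟶ W}
    (hpb : IsPullback h' g' g h) : ∃ μ : X ⟶ V, μ ≫ h' = f ∧ S.IsConflation μ g' := by
  have hw : f ≫ g = (0 : X ⟶ W) ≫ h := by rw [hS.comp_eq_zero hfg, zero_comp]
  refine ⟨hpb.lift f 0 hw, hpb.lift_fst _ _ _, hS.isConflation_of_isDeflation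
    (hS.isDeflation_of_isPullback hpb hfg.isDeflation) (hpb.lift_snd _ _ _) ?_ ?_⟩
  · intro T u v huv
    refine hS.cancel_inflation hfg.isInflation ?_
    rw [← hpb.lift_fst f 0 hw, ← Category.assoc, ← Category.assoc, huv]
  · intro T t ht
    obtain ⟨u, hu⟩ := hS.exists_lift hfg (t := t ≫ h')
      (by rw [Category.assoc, hpb.w, ← Category.assoc, ht, zero_comp])
    exact ⟨u, hpb.hom_ext (by rw [Category.assoc, hpb.lift_fst, hu])
      (by rw [Category.assoc, hpb.lift_snd, comp_zero, ht])⟩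

theorem isConflation_comp_of_isPushout (hS : S.IsExactStructure) {M Q : C} {m : M ⟶ X}
    {d : X ⟶ W} {f : X ⟶ Y} {h' : Y ⟶ Q} {f' : W ⟶ Q}
    (hmd : S.IsConflation m d) (hf : S.IsInflation f) (hpo : IsPushout f d h' f') :
    S.IsConflation (m ≫ f) h' := by
  refine hS.isConflation_of_isInflation (hS.inflation_comp hmd.isInflation hf) ?_ ?_ ?_
  · rw [Category.assoc, hpo.w, ← Category.assoc, hS.comp_eq_zero hmd, zero_comp]
  · intro V u v huv
    refine hpo.hom_ext huv (hS.cancel_deflation hmd.isDeflation ?_)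
    rw [← Category.assoc, ← hpo.w, Category.assoc, huv, ← Category.assoc, hpo.w,
      Category.assoc]
  · intro V t ht
    rw [Category.assoc] at ht
    obtain ⟨u, hu⟩ := hS.exists_desc hmd ht
    exact ⟨hpo.desc t u hu.symm, hpo.inl_desc _ _ _⟩

theorem isConflation_comp_of_isPullback (hS : S.IsExactStructure) {E N : C} {a : X ⟶ Y}
    {c : Y ⟶ Z} {ζ : E ⟶ Y} {n : N ⟶ E} {q : N ⟶ X}
    (hac : S.IsConflation a c) (hζ : S.IsDeflation ζ) (hpb : IsPullback n q ζ a) :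
    S.IsConflation n (ζ ≫ c) := by
  refine hS.isConflation_of_isDeflation (hS.deflation_comp hζ hac.isDeflation) ?_ ?_ ?_
  · rw [← Category.assoc, hpb.w, Category.assoc, hS.comp_eq_zero hac, comp_zero]
  · intro T u v huv
    refine hpb.hom_ext huv (hS.cancel_inflation hac.isInflation ?_)
    rw [Category.assoc, ← hpb.w, ← Category.assoc, huv, Category.assoc, hpb.w,
      ← Category.assoc]
  · intro T t ht
    rw [← Category.assoc] at ht
    obtain ⟨u, hu⟩ := hS.exists_lift hac ht
    exact ⟨hpb.lift t u hu.symm, hpb.lift_fst _ _ _⟩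

theorem exists_retraction_of_section (hS : S.IsExactStructure) {f : X ⟶ Y} {g : Y ⟶ Z}
    (h : S.IsConflation f g) {s : Z ⟶ Y} (hs : s ≫ g = 𝟙 Z) :
    ∃ r : Y ⟶ X, f ≫ r = 𝟙 X ∧ s ≫ r = 0 ∧ r ≫ f + g ≫ s = 𝟙 Y := by
  obtain ⟨r, hr⟩ := hS.exists_lift h (t := 𝟙 Y - g ≫ s) (by simp [Preadditive.sub_comp, hs])
  have hfg := hS.comp_eq_zero h
  refine ⟨r, hS.cancel_inflation h.isInflation ?_, hS.cancel_inflation h.isInflation ?_,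
    by rw [hr]; abel⟩
  · simp [hr, Preadditive.comp_sub, reassoc_of% hfg]
  · simp [hr, Preadditive.comp_sub, reassoc_of% hs]

theorem exists_section_of_retraction (hS : S.IsExactStructure) {f : X ⟶ Y} {g : Y ⟶ Z}
    (h : S.IsConflation f g) {r : Y ⟶ X} (hr : f ≫ r = 𝟙 X) : ∃ s : Z ⟶ Y, s ≫ g = 𝟙 Z := by
  obtain ⟨s, hs⟩ := hS.exists_desc h (t := 𝟙 Y - r ≫ f)
    (by simp [Preadditive.comp_sub, reassoc_of% hr])
  refine ⟨s, hS.cancel_deflation h.isDeflation ?_⟩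
  simp [reassoc_of% hs, Preadditive.sub_comp, hS.comp_eq_zero h]

theorem isPullback_of_isConflation_comp (hS : S.IsExactStructure) {N : C} {n : N ⟶ X}
    {p : X ⟶ Y} {g : Y ⟶ Z} [HasKernel g] (hn : S.IsConflation n (p ≫ g))
    {ξ : N ⟶ kernel g} (hξ : ξ ≫ kernel.ι g = n ≫ p) : IsPullback n ξ p (kernel.ι g) := by
  have hlift : ∀ s : PullbackCone p (kernel.ι g), ∃ u, u ≫ n = s.fst := fun s =>
    hS.exists_lift hn (by rw [← Category.assoc, s.condition, Category.assoc, kernel.condition,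
      comp_zero])
  choose l hl using hlift
  refine IsPullback.of_isLimit' ⟨hξ.symm⟩ (PullbackCone.IsLimit.mk hξ.symm l hl (fun s => ?_)
    fun s m hm _ => hS.cancel_inflation hn.isInflation (hm.trans (hl s).symm))
  rw [← cancel_mono (kernel.ι g), Category.assoc, hξ, ← Category.assoc, hl, s.condition]

theorem isPushout_of_isConflation_comp (hS : S.IsExactStructure) {N : C} {n : N ⟶ X}
    {p : X ⟶ Y} {g : Y ⟶ Z} [HasKernel g] (hn : S.IsConflation n (p ≫ g))
    (hp : S.IsDeflation p) {ξ : N ⟶ kernel g} (hξ : ξ ≫ kernel.ι g = n ≫ p)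
    (hξd : S.IsDeflation ξ) : IsPushout n ξ p (kernel.ι g) := by
  obtain ⟨N₀, n₀, hn₀⟩ := hp
  obtain ⟨ν, hν⟩ := hS.exists_lift hn (t := n₀)
    (by rw [← Category.assoc, hS.comp_eq_zero hn₀, zero_comp])
  have hνξ : ν ≫ ξ = 0 := by
    rw [← cancel_mono (kernel.ι g), Category.assoc, hξ, ← Category.assoc, hν,
      hS.comp_eq_zero hn₀, zero_comp]
  have hdesc : ∀ s : PushoutCocone n ξ, ∃ u, p ≫ u = s.inl := fun s =>
    hS.exists_desc hn₀ (by rw [← hν, Category.assoc, s.condition, ← Category.assoc, hνξ,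
      zero_comp])
  choose d hd using hdesc
  refine IsPushout.of_isColimit' ⟨hξ.symm⟩ (PushoutCocone.IsColimit.mk hξ.symm d hd
    (fun s => hS.cancel_deflation hξd ?_)
    fun s m hm _ => hS.cancel_deflation hn₀.isDeflation (hm.trans (hd s).symm))
  rw [← Category.assoc, hξ, Category.assoc, hd, s.condition]

section Biproducts

variable [HasBinaryBiproducts C]

theorem nonempty_iso_biprod_of_section (hS : S.IsExactStructure) {f : X ⟶ Y} {g : Y ⟶ Z}
    (h : S.IsConflation f g) {s : Z ⟶ Y} (hs : s ≫ g = 𝟙 Z) : Nonempty (Y ≅ X ⊞ Z) := by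
  obtain ⟨r, hfr, hsr, hrf⟩ := hS.exists_retraction_of_section h hs
  have hfg := hS.comp_eq_zero h
  exact ⟨⟨biprod.lift r g, biprod.desc f s, by rw [biprod.lift_desc, hrf],
    by ext <;> simp [hfr, hsr, hs, hfg]⟩⟩

theorem isDeflation_biprod_map_id (hS : S.IsExactStructure) {g : Y ⟶ Z}
    (hg : S.IsDeflation g) (W : C) : S.IsDeflation (biprod.map g (𝟙 W)) := by
  have hpb : IsPullback (biprod.fst : Y ⊞ W ⟶ Y) (biprod.map g (𝟙 W)) g biprod.fst :=
    IsPullback.of_isLimit' ⟨by simp⟩ (PullbackCone.IsLimit.mk _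
      (fun s => biprod.lift s.fst (s.snd ≫ biprod.snd)) (fun s => by simp)
      (fun s => by ext <;> simp [s.condition]) (fun s m h₁ h₂ => by ext <;> simp [← h₁, ← h₂]))
  exact hS.isDeflation_of_isPullback hpb hg

theorem hasKernel_of_isDeflation_comp (hS : S.IsExactStructure)
    (hW : WeaklyIdempotentComplete C) {f : X ⟶ Y} {g : Y ⟶ Z} (h : S.IsDeflation (f ≫ g)) :
    HasKernel g := by
  obtain ⟨P, θ, d, hpb, -⟩ := hS.pullback_deflation (f ≫ g) g h
  obtain ⟨K, e, -, heθ⟩ :=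
    hW.exists_iso_biprod_of_section (hpb.lift_fst (𝟙 X) f (Category.id_comp _))
  -- `P ≅ X ⊞ K` with `θ` the first projection, so `K` is the kernel of `θ` and hence of `g`
  have hι : (biprod.inr ≫ e.inv ≫ d) ≫ g = 0 := by
    rw [Category.assoc, Category.assoc, ← hpb.w, ← heθ]
    simp
  have hfac : ∀ {V : C} (t : V ⟶ Y) (ht : t ≫ g = 0),
      hpb.lift 0 t (by simp [ht]) ≫ e.hom = (hpb.lift 0 t (by simp [ht]) ≫ e.hom ≫
        biprod.snd) ≫ biprod.inr := fun t ht => by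
    ext
    · simp [heθ]
    · simp
  refine HasLimit.mk ⟨_, KernelFork.IsLimit.ofι _ hι
    (fun t ht => hpb.lift 0 t (by simp [ht]) ≫ e.hom ≫ biprod.snd) (fun t ht => ?_)
    fun t ht m hm => ?_⟩
  · rw [← Category.assoc, ← hfac t ht]
    simp
  · have : m ≫ biprod.inr ≫ e.inv = hpb.lift 0 t (by simp [ht]) :=
      hpb.hom_ext (by simp [← heθ]) (by simpa using hm)
    simp [← this]

theorem isDeflation_of_isDeflation_comp_of_isDeflation (hS : S.IsExactStructure)
    (hW : WeaklyIdempotentComplete C) {p : X ⟶ Y} {g : Y ⟶ Z} (hp : S.IsDeflation p)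
    (hpg : S.IsDeflation (p ≫ g)) : S.IsDeflation g := by
  have := hS.hasKernel_of_isDeflation_comp hW hpg
  obtain ⟨N, n, hn⟩ := hpg
  have hξ : kernel.lift g (n ≫ p) (by rw [Category.assoc, hS.comp_eq_zero hn]) ≫
      kernel.ι g = n ≫ p := kernel.lift_ι _ _ _
  have hξd := hS.isDeflation_of_isPullback (hS.isPullback_of_isConflation_comp hn hξ) hp
  obtain ⟨w, hw, hpw⟩ := hS.exists_isConflation_of_isPushout hn
    (hS.isPushout_of_isConflation_comp hn hp hξ hξd)
  obtain rfl : w = g := hS.cancel_deflation hp hpw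
  exact hw.isDeflation

end Biproducts

section ZeroObject

variable [HasZeroObject C]

theorem isConflation_zero_id (hS : S.IsExactStructure) (Y : C) :
    S.IsConflation (0 : (0 : C) ⟶ Y) (𝟙 Y) :=
  hS.isConflation_of_isDeflation (hS.id_deflation Y) (by simp)
    (fun _ => (isZero_zero C).eq_of_tgt _ _) fun t ht => ⟨0, by simp_all⟩

theorem isConflation_id_zero (hS : S.IsExactStructure) (X : C) :
    S.IsConflation (𝟙 X) (0 : X ⟶ 0) :=
  hS.isConflation_of_isInflation (hS.id_inflation X) (by simp)
    (fun _ => (isZero_zero C).eq_of_src _ _) fun t ht => ⟨0, by simp_all⟩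

variable [HasBinaryBiproducts C]

theorem isConflation_inl_snd (hS : S.IsExactStructure) (X Y : C) :
    S.IsConflation (biprod.inl : X ⟶ X ⊞ Y) biprod.snd := by
  obtain ⟨w, hw, hinr⟩ := hS.exists_isConflation_of_isPushout (hS.isConflation_zero_id Y)
    (IsPushout.of_has_biproduct X Y).flip
  obtain rfl : w = biprod.snd := by
    ext
    · simpa using hS.comp_eq_zero hw
    · simpa using hinr
  exact hw

theorem isConflation_inr_fst (hS : S.IsExactStructure) (X Y : C) :
    S.IsConflation (biprod.inr : Y ⟶ X ⊞ Y) biprod.fst := by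
  obtain ⟨w, hw, hinl⟩ := hS.exists_isConflation_of_isPushout (hS.isConflation_zero_id X)
    (IsPushout.of_has_biproduct X Y)
  obtain rfl : w = biprod.fst := by
    ext
    · simpa using hinl
    · simpa using hS.comp_eq_zero hw
  exact hw

theorem isDeflation_of_comp_eq_id (hS : S.IsExactStructure) (hW : WeaklyIdempotentComplete C)
    {σ : X ⟶ Y} {ρ : Y ⟶ X} (h : σ ≫ ρ = 𝟙 X) : S.IsDeflation ρ := by
  obtain ⟨Q, e, -, he⟩ := hW.exists_iso_biprod_of_section h
  rw [← he]
  exact hS.isDeflation_iso_hom_comp e (hS.isConflation_inr_fst X Q).isDeflation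

/-- The dual of Bühler's obscure axiom; weak idempotent completeness provides the kernel of `g`
that the axiom presupposes. -/
theorem isDeflation_of_isDeflation_comp (hS : S.IsExactStructure)
    (hW : WeaklyIdempotentComplete C) {f : X ⟶ Y} {g : Y ⟶ Z} (h : S.IsDeflation (f ≫ g)) :
    S.IsDeflation g := by
  obtain ⟨P, θ, g', hpb, hg'⟩ := hS.pullback_deflation (f ≫ g) g h
  have hθ : S.IsDeflation θ :=
    hS.isDeflation_of_comp_eq_id hW (hpb.lift_fst (𝟙 X) f (Category.id_comp _))
  have hg'g : S.IsDeflation (g' ≫ g) := by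
    rw [← hpb.w]
    exact hS.deflation_comp hθ h
  exact hS.isDeflation_of_isDeflation_comp_of_isDeflation hW hg' hg'g

end ZeroObject

end IsExactStructure

theorem ext1Zero_of_isZero (hX : IsZero X) (Y : C) : S.ext1Zero X Y :=
  fun _ _ _ _ => ⟨0, hX.eq_of_src _ _⟩

theorem ext1Zero_of_isProjObj (hX : S.IsProjObj X) (Y : C) : S.ext1Zero X Y :=
  fun _ _ g h => hX g h.isDeflation (𝟙 X)

theorem ext1Zero_of_section (hS : S.IsExactStructure) (i : X ⟶ Z) (r : Z ⟶ X)
    (hir : i ≫ r = 𝟙 X) (h : S.ext1Zero Z Y) : S.ext1Zero X Y := by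
  intro E f g hfg
  obtain ⟨V, a, b, hpb, -⟩ := hS.pullback_deflation g r hfg.isDeflation
  obtain ⟨μ, -, hμ⟩ := hS.exists_isConflation_of_isPullback hfg hpb
  obtain ⟨s, hs⟩ := h _ _ _ hμ
  refine ⟨i ≫ s ≫ a, ?_⟩
  rw [Category.assoc, Category.assoc, hpb.w, ← Category.assoc s, hs, Category.id_comp, hir]

theorem ext1Zero_of_isConflation (hS : S.IsExactStructure) {a : X ⟶ Y} {c : Y ⟶ Z}
    (hac : S.IsConflation a c) (hX : S.ext1Zero X W) (hZ : S.ext1Zero Z W) :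
    S.ext1Zero Y W := by
  intro E ξ ζ hξζ
  obtain ⟨N, n, q, hpb, -⟩ := hS.pullback_deflation ζ a hξζ.isDeflation
  obtain ⟨ν, hνn, hν⟩ := hS.exists_isConflation_of_isPullback hξζ hpb
  have hn := hS.isConflation_comp_of_isPullback hac hξζ.isDeflation hpb
  obtain ⟨s, hs⟩ := hX _ _ _ hν
  obtain ⟨r, hr, -, -⟩ := hS.exists_retraction_of_section hν hs
  obtain ⟨E', σ, j, ω, hpo, hjω, -⟩ := hS.exists_isPushout_isConflation hn r
  obtain ⟨s', hs'⟩ := hZ _ _ _ hjω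
  obtain ⟨r', hr', -, -⟩ := hS.exists_retraction_of_section hjω hs'
  -- the retractions of the two split conflations glue to a retraction of `ξ`
  refine hS.exists_section_of_retraction hξζ (r := σ ≫ r') ?_
  calc ξ ≫ σ ≫ r' = ν ≫ (n ≫ σ) ≫ r' := by rw [← hνn]; simp only [Category.assoc]
    _ = 𝟙 W := by rw [hpo.w, Category.assoc, hr', Category.comp_id, hr]

theorem exists_lift_of_ext1Zero (hS : S.IsExactStructure) {K T : C} {y : Y ⟶ T}
    {t : T ⟶ X} (hyt : S.IsConflation y t) (hK : S.ext1Zero K Y) (κ : K ⟶ X) :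
    ∃ l : K ⟶ T, l ≫ t = κ := by
  obtain ⟨V, a, b, hpb, -⟩ := hS.pullback_deflation t κ hyt.isDeflation
  obtain ⟨μ, -, hμ⟩ := hS.exists_isConflation_of_isPullback hyt hpb
  obtain ⟨s, hs⟩ := hK _ _ _ hμ
  exact ⟨s ≫ a, by rw [Category.assoc, hpb.w, ← Category.assoc, hs, Category.id_comp]⟩

theorem exists_extend_of_ext1Zero (hS : S.IsExactStructure) {f : X ⟶ Y} {g : Y ⟶ Z}
    (hfg : S.IsConflation f g) (hZ : S.ext1Zero Z W) (u : X ⟶ W) :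
    ∃ v : Y ⟶ W, f ≫ v = u := by
  obtain ⟨V, a, j, ω, hpo, hjω, -⟩ := hS.exists_isPushout_isConflation hfg u
  obtain ⟨s, hs⟩ := hZ _ _ _ hjω
  obtain ⟨r, hr, -, -⟩ := hS.exists_retraction_of_section hjω hs
  exact ⟨a ≫ r, by rw [← Category.assoc, hpo.w, Category.assoc, hr, Category.comp_id]⟩

theorem isProjRel_univ_iff {P : C} : S.IsProjRel Set.univ P ↔ S.IsProjObj P :=
  ⟨fun h _ _ g ⟨_, f, hfg⟩ u => h.2 g trivial trivial ⟨_, f, trivial, hfg⟩ u,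
    fun h => ⟨trivial, fun _ _ g _ _ ⟨_, f, _, hfg⟩ u => h g ⟨_, f, hfg⟩ u⟩⟩

theorem extSuccZero_zero_iff : S.extSuccZero 0 X Y ↔ S.ext1Zero X Y :=
  ⟨fun h E f g hfg => h E f g trivial hfg, fun h E f g _ hfg => h E f g hfg⟩

theorem extSuccZero_succ_iff {n : ℕ} :
    S.extSuccZero (n + 1) X Y ↔ ∀ ⦃K P : C⦄ (i : K ⟶ P) (p : P ⟶ X),
      S.IsProjObj P → S.IsConflation i p → S.extSuccZero n K Y :=
  ⟨fun h K P i p hP hip => h K P i p trivial (isProjRel_univ_iff.2 hP) hip,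
    fun h _ _ i p _ hP hip => h i p (isProjRel_univ_iff.1 hP) hip⟩

theorem extSuccZero_of_forall_ext1Zero (hS : S.IsExactStructure) (n : ℕ)
    (hX : ∀ Y, S.ext1Zero X Y) (Y : C) : S.extSuccZero n X Y := by
  induction n generalizing X with
  | zero => exact extSuccZero_zero_iff.2 (hX Y)
  | succ n ih =>
    refine extSuccZero_succ_iff.2 fun K P i p hP hip => ih fun Y' => ?_
    obtain ⟨s, hs⟩ := hX K P i p hip
    obtain ⟨r, hr, -, -⟩ := hS.exists_retraction_of_section hip hs
    exact ext1Zero_of_section hS i r hr (ext1Zero_of_isProjObj hP Y')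

theorem ext1Zero_syzygy_of_mem_perp1 (hS : S.IsExactStructure) {D : Set C}
    (hfac : ∀ {X Y : C} (g : X ⟶ Y), X ∈ D → S.IsDeflation g → Y ∈ D)
    (hsub : ∀ X : C, ∃ (D₁ Q : C) (f : X ⟶ D₁) (g : D₁ ⟶ Q), D₁ ∈ D ∧ S.IsConflation f g)
    {K P T : C} {i : K ⟶ P} {p : P ⟶ T} (hT : T ∈ S.perp1 D) (hP : S.IsProjObj P)
    (hip : S.IsConflation i p) (Y : C) : S.ext1Zero K Y := by
  intro E ξ ζ hξζ
  obtain ⟨D₁, Q, j₁, q, hD₁, hj₁q⟩ := hsub E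
  obtain ⟨V, σ, j, π, hpo, hjπ, hσπ⟩ := hS.exists_isPushout_isConflation hj₁q ζ
  have hσ := hS.isConflation_comp_of_isPushout hξζ hj₁q.isInflation hpo
  -- `V ∈ D`, so `j` extends along `i`; lifting the extension along `σ` yields a section of `ζ`
  obtain ⟨φ, hφ⟩ := exists_extend_of_ext1Zero hS hip (hT V (hfac σ hD₁ hσ.isDeflation)) j
  obtain ⟨ψ, hψ⟩ := hP σ hσ.isDeflation φ
  have hψσ : (i ≫ ψ) ≫ σ = j := by rw [Category.assoc, hψ, hφ]
  obtain ⟨s, hs⟩ := hS.exists_lift hj₁q (t := i ≫ ψ)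
    (by rw [← hσπ, ← Category.assoc, hψσ, hS.comp_eq_zero hjπ])
  refine ⟨s, hS.cancel_inflation hjπ.isInflation ?_⟩
  rw [Category.assoc, ← hpo.w, ← Category.assoc, hs, hψσ, Category.id_comp]

theorem mem_fac_of_mem (hS : S.IsExactStructure) {T : Set C} (hX : X ∈ T) : X ∈ S.Fac T :=
  ⟨X, 𝟙 X, hX, hS.id_deflation X⟩

theorem mem_fac_of_isDeflation (hS : S.IsExactStructure) {T : Set C} (hX : X ∈ S.Fac T)
    {g : X ⟶ Y} (hg : S.IsDeflation g) : Y ∈ S.Fac T := by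
  obtain ⟨T', t, hT', ht⟩ := hX
  exact ⟨T', t ≫ g, hT', hS.deflation_comp ht hg⟩

theorem fac_subset_of_isTorsionClass {T D : Set C} (hD : S.IsTorsionClass D) (hT : T ⊆ D) :
    S.Fac T ⊆ D :=
  fun _ ⟨_, g, hT', hg⟩ => hD.1 g (hT hT') hg

theorem perp1_eq_of_isCotorsionPair {Cc D : Set C} (hCD : S.IsCotorsionPair Cc D) :
    S.perp1 D = Cc := by
  obtain ⟨hCc, -, horth, hres, -⟩ := hCD
  refine Set.Subset.antisymm (fun X hX => ?_) fun X hX Y hY => horth X hX Y hY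
  obtain ⟨D₀, C₀, f, g, hD₀, hC₀, hfg⟩ := hres X
  obtain ⟨s, hs⟩ := hX D₀ hD₀ _ _ _ hfg
  exact hCc hC₀ s g hs

theorem fac_inter_eq_of_isCotorsionPair {Cc D : Set C} (hCD : S.IsCotorsionPair Cc D)
    (hD : S.IsTorsionClass D) : S.Fac (Cc ∩ D) = D := by
  refine Set.Subset.antisymm (fac_subset_of_isTorsionClass hD Set.inter_subset_right)
    fun X hX => ?_
  obtain ⟨D₀, C₀, f, g, hD₀, hC₀, hfg⟩ := hCD.2.2.2.1 X
  exact ⟨C₀, g, ⟨hC₀, hD.2 hfg hD₀ hX⟩, hfg.isDeflation⟩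

theorem zero_mem_of_isTorsionClass [HasZeroObject C] (hS : S.IsExactStructure) {D : Set C}
    (hD : S.IsTorsionClass D) (hX : X ∈ D) : (0 : C) ∈ D :=
  hD.1 _ hX (hS.isConflation_id_zero X).isDeflation

section

variable [HasZeroObject C] [HasBinaryBiproducts C] {T : Set C}

theorem mem_fac_of_isConflation (hS : S.IsExactStructure) (hT : S.IsTauRigid T)
    {f : X ⟶ Y} {g : Y ⟶ Z} (hfg : S.IsConflation f g) (hX : X ∈ S.Fac T)
    (hZ : Z ∈ S.Fac T) : Y ∈ S.Fac T := by
  obtain ⟨T₁, t, hT₁, ht⟩ := hZ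
  obtain ⟨V, a, b, hpb, hb⟩ := hS.pullback_deflation t g ht
  obtain ⟨μ, -, hμ⟩ := hS.exists_isConflation_of_isPullback hfg hpb.flip
  obtain ⟨s, hs⟩ := hT.2 T₁ hT₁ X hX _ _ _ hμ
  obtain ⟨e⟩ := hS.nonempty_iso_biprod_of_section hμ hs
  obtain ⟨T₀, t₀, hT₀, ht₀⟩ := hX
  exact ⟨T₀ ⊞ T₁, biprod.map t₀ (𝟙 T₁) ≫ e.inv ≫ b, hT.1.biprod_mem hT₀ hT₁,
    hS.deflation_comp (hS.isDeflation_biprod_map_id ht₀ T₁)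
      (hS.isDeflation_iso_hom_comp e.symm hb)⟩

theorem isTorsionClass_fac (hS : S.IsExactStructure) (hT : S.IsTauRigid T) :
    S.IsTorsionClass (S.Fac T) :=
  ⟨fun _ hX hg => mem_fac_of_isDeflation hS hX hg,
    fun hfg hX hZ => mem_fac_of_isConflation hS hT hfg hX hZ⟩

theorem isTauCotorsionPair_of_isSupportTauTilting (hS : S.IsExactStructure)
    (hT : S.IsSupportTauTilting T) : S.IsTauCotorsionPair (S.perp1 (S.Fac T)) (S.Fac T) := by
  refine ⟨rfl, fun P hP => ?_⟩
  obtain ⟨K, T₀, T₁, d, i, g, hT₁, hd, hig, hT₀, happrox⟩ := hT.2 P hP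
  refine ⟨K, T₀, T₁, d, i, g, hT.1.2 T₀ hT₀, mem_fac_of_mem hS hT₀, hT.1.2 T₁ hT₁, hd, hig,
    mem_fac_of_mem hS hT₀, ?_⟩
  rintro X ⟨T', t, hT', ht⟩ u
  obtain ⟨v, hv⟩ := hP t ht u
  obtain ⟨w, hw⟩ := happrox T' hT' v
  exact ⟨w ≫ t, by rw [← Category.assoc, hw, hv]⟩

theorem exists_isConflation_mem_fac_of_isInflation (hS : S.IsExactStructure)
    (hW : WeaklyIdempotentComplete C) (hEP : S.HasEnoughProjectives)
    (happrox : ∀ P ∈ S.projClass, S.ApproxSeq T P) {T' : C} {y : Y ⟶ T'} (hT' : T' ∈ T)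
    (hy : S.IsInflation y) :
    ∃ (U T₁ : C) (υ : Y ⟶ U) (ω : U ⟶ T₁), U ∈ S.Fac T ∧ T₁ ∈ T ∧ S.IsConflation υ ω := by
  obtain ⟨X, t, hyt⟩ := hy
  obtain ⟨Q, π, hQ, hπ⟩ := hEP Y
  obtain ⟨K, T₀, T₁, d, i, g, hT₁, hd, hig, hT₀, hLA⟩ := happrox Q hQ
  obtain ⟨c, hc⟩ := hLA T' hT' (π ≫ y)
  have hict : (i ≫ c) ≫ t = 0 := hS.cancel_deflation hd (by
    rw [comp_zero, ← Category.assoc, ← Category.assoc, hc, Category.assoc,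
      hS.comp_eq_zero hyt, comp_zero])
  obtain ⟨w, hw⟩ := hS.exists_lift hyt hict
  have hdw : d ≫ w = π := hS.cancel_inflation hyt.isInflation (by
    rw [Category.assoc, hw, ← Category.assoc, hc])
  have hwd : S.IsDeflation w := hS.isDeflation_of_isDeflation_comp hW (f := d) (hdw ▸ hπ)
  obtain ⟨U, a, υ, ω, hpo, hυω, -⟩ := hS.exists_isPushout_isConflation hig w
  obtain ⟨M, m, hm⟩ := hwd
  exact ⟨U, T₁, υ, ω, ⟨T₀, a, hT₀, (hS.isConflation_comp_of_isPushout hm hig.isInflation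
    hpo).isDeflation⟩, hT₁, hυω⟩

theorem exists_isConflation_of_mem_fac (hS : S.IsExactStructure)
    (hW : WeaklyIdempotentComplete C) (hEP : S.HasEnoughProjectives)
    (hT : S.IsSupportTauTilting T) (hX : X ∈ S.Fac T) :
    ∃ (U V : C) (u : U ⟶ V) (v : V ⟶ X), V ∈ T ∧ U ∈ S.Fac T ∧ S.IsConflation u v := by
  obtain ⟨T', t, hT', Y, y, hyt⟩ := hX
  obtain ⟨U, T₁, υ, ω, hU, hT₁, hυω⟩ :=
    exists_isConflation_mem_fac_of_isInflation hS hW hEP hT.2 hT' hyt.isInflation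
  obtain ⟨V, σ, j, ωV, hpo, hjω, -⟩ := hS.exists_isPushout_isConflation hυω y
  obtain ⟨v, hσv, -⟩ := hS.exists_isConflation_of_isPushout hyt hpo.flip
  obtain ⟨s, hs⟩ := hT.1.2 T₁ hT₁ T' (mem_fac_of_mem hS hT') _ _ _ hjω
  obtain ⟨e⟩ := hS.nonempty_iso_biprod_of_section hjω hs
  exact ⟨U, V, σ, v, hT.1.1.mem_of_iso e.symm (hT.1.1.biprod_mem hT' hT₁), hU, hσv⟩

theorem perp1_fac_inter_eq (hS : S.IsExactStructure) (hW : WeaklyIdempotentComplete C)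
    (hEP : S.HasEnoughProjectives) (hT : S.IsSupportTauTilting T) :
    S.perp1 (S.Fac T) ∩ S.Fac T = T := by
  refine Set.Subset.antisymm (fun X ⟨hX, hXT⟩ => ?_) fun X hX =>
    ⟨hT.1.2 X hX, mem_fac_of_mem hS hX⟩
  obtain ⟨U, V, u, v, hV, hU, huv⟩ := exists_isConflation_of_mem_fac hS hW hEP hT hXT
  obtain ⟨s, hs⟩ := hX U hU _ _ _ huv
  exact hT.1.1.summand_mem hV s v hs

theorem additivelyClosed_perp1_inter (hS : S.IsExactStructure)
    (hW : WeaklyIdempotentComplete C) {D : Set C} (hD : S.IsTorsionClass D)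
    (h0 : (0 : C) ∈ D) : AdditivelyClosed (S.perp1 D ∩ D) where
  mem_of_iso e hX := ⟨fun Y hY => ext1Zero_of_section hS e.inv e.hom e.inv_hom_id (hX.1 Y hY),
    hD.1 e.hom hX.2 (hS.isDeflation_of_iso e)⟩
  zero_mem := ⟨fun Y _ => ext1Zero_of_isZero (isZero_zero C) Y, h0⟩
  biprod_mem hX hY := ⟨fun Z hZ => ext1Zero_of_isConflation hS (hS.isConflation_inl_snd _ _)
    (hX.1 Z hZ) (hY.1 Z hZ), hD.2 (hS.isConflation_inl_snd _ _) hX.2 hY.2⟩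
  summand_mem hZ i r hir := ⟨fun Y hY => ext1Zero_of_section hS i r hir (hZ.1 Y hY),
    hD.1 r hZ.2 (hS.isDeflation_of_comp_eq_id hW hir)⟩

theorem fac_inter_eq_of_isTauCotorsionPair (hS : S.IsExactStructure)
    (hW : WeaklyIdempotentComplete C) (hEP : S.HasEnoughProjectives) {Cc D : Set C}
    (hCD : S.IsTauCotorsionPair Cc D) (hD : S.IsTorsionClass D) : S.Fac (Cc ∩ D) = D := by
  refine Set.Subset.antisymm (fac_subset_of_isTorsionClass hD Set.inter_subset_right)
    fun X hX => ?_
  obtain ⟨P, p, hP, hp⟩ := hEP X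
  obtain ⟨K, D₀, C₀, d, i, g, hD₀C, hD₀D, -, -, -, hLA⟩ := hCD.2 P hP
  obtain ⟨v, hv⟩ := hLA.2 X hX p
  exact ⟨D₀, v, ⟨hD₀C, hD₀D⟩, hS.isDeflation_of_isDeflation_comp hW (f := d ≫ i) (hv ▸ hp)⟩

theorem isSupportTauTilting_inter_of_isTauCotorsionPair (hS : S.IsExactStructure)
    (hW : WeaklyIdempotentComplete C) (hEP : S.HasEnoughProjectives) {Cc D : Set C}
    (hCD : S.IsTauCotorsionPair Cc D) (hD : S.IsTorsionClass D) :
    S.IsSupportTauTilting (Cc ∩ D) := by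
  have hFac := fac_inter_eq_of_isTauCotorsionPair hS hW hEP hCD hD
  obtain ⟨rfl, happrox⟩ := hCD
  obtain ⟨Q, -, hQ, -⟩ := hEP 0
  obtain ⟨-, D₀, -, -, -, -, -, hD₀, -⟩ := happrox Q hQ
  refine ⟨⟨additivelyClosed_perp1_inter hS hW hD (zero_mem_of_isTorsionClass hS hD hD₀),
    fun T' hT' X hX => hT'.1 X (hFac ▸ hX)⟩, fun P hP => ?_⟩
  obtain ⟨K, D₀, C₀, d, i, g, hD₀C, hD₀D, hC₀, hd, hig, hLA⟩ := happrox P hP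
  exact ⟨K, D₀, C₀, d, i, g, ⟨hC₀, hD.1 g hD₀D hig.isDeflation⟩, hd, hig, ⟨hD₀C, hD₀D⟩,
    fun T' hT' u => hLA.2 T' hT'.2 u⟩

theorem approxSeq_of_isTilting (hS : S.IsExactStructure) (hT : S.IsTilting T) {P : C}
    (hP : P ∈ S.projClass) : S.ApproxSeq T P := by
  obtain ⟨T₀, T₁, f, g, hT₀, hT₁, hfg⟩ := hT.2.2.2 P hP
  refine ⟨P, T₀, T₁, 𝟙 P, f, g, hT₁, hS.id_deflation P, hfg, hT₀, fun T' hT' u => ?_⟩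
  simpa using exists_extend_of_ext1Zero hS hfg (extSuccZero_zero_iff.1 (hT.2.1 T₁ hT₁ T' hT' 0)) u

theorem isTauRigid_of_isTilting (hS : S.IsExactStructure) (hEP : S.HasEnoughProjectives)
    (hT : S.IsTilting T) : S.IsTauRigid T := by
  refine ⟨hT.1, fun T' hT' X hX E ξ ζ hξζ => ?_⟩
  obtain ⟨T₀, t, hT₀, Y, y, hyt⟩ := hX
  obtain ⟨P, p, hP, K, k, hkp⟩ := hEP T'
  obtain ⟨e, he⟩ := hP ζ hξζ.isDeflation p
  obtain ⟨κ, hκ⟩ := hS.exists_lift hξζ (t := k ≫ e)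
    (by rw [Category.assoc, he, hS.comp_eq_zero hkp])
  have hKY : S.ext1Zero K Y :=
    extSuccZero_zero_iff.1 (extSuccZero_succ_iff.1 (hT.2.2.1 T' hT' Y) k p hP hkp)
  -- the conflation `T₀ ↣ E' ↠ T'` obtained by pushing out along a lift of `κ` maps to `ξ, ζ`
  -- and splits, since `Ext¹(T', T₀) = 0`
  obtain ⟨l, hl⟩ := exists_lift_of_ext1Zero hS hyt hKY κ
  obtain ⟨E', a, j, ω, hpo, hjω, haω⟩ := hS.exists_isPushout_isConflation hkp l
  have hw : k ≫ e = l ≫ t ≫ ξ := by rw [← hκ, ← hl, Category.assoc]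
  have hω : hpo.desc e (t ≫ ξ) hw ≫ ζ = ω := hpo.hom_ext (by simp [he, haω])
    (by simp [hS.comp_eq_zero hξζ, hS.comp_eq_zero hjω])
  obtain ⟨s, hs⟩ := extSuccZero_zero_iff.1 (hT.2.1 T' hT' T₀ hT₀ 0) _ _ _ hjω
  exact ⟨s ≫ hpo.desc e (t ≫ ξ) hw, by rw [Category.assoc, hω, hs]⟩

theorem isSupportTauTilting_of_isTilting (hS : S.IsExactStructure)
    (hEP : S.HasEnoughProjectives) (hT : S.IsTilting T) : S.IsSupportTauTilting T :=
  ⟨isTauRigid_of_isTilting hS hEP hT, fun _ hP => approxSeq_of_isTilting hS hT hP⟩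

theorem exists_isConflation_mem_fac_of_isTilting (hS : S.IsExactStructure)
    (hEP : S.HasEnoughProjectives) (hT : S.IsTilting T) (X : C) :
    ∃ (D₁ T₁ : C) (f : X ⟶ D₁) (g : D₁ ⟶ T₁), D₁ ∈ S.Fac T ∧ T₁ ∈ T ∧ S.IsConflation f g := by
  obtain ⟨P, p, hP, Y, y, hyp⟩ := hEP X
  obtain ⟨T₀, T₁, f, g, hT₀, hT₁, hfg⟩ := hT.2.2.2 P hP
  obtain ⟨V, a, j, ω, hpo, hjω, -⟩ := hS.exists_isPushout_isConflation hfg p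
  exact ⟨V, T₁, j, ω, ⟨T₀, a, hT₀, (hS.isConflation_comp_of_isPushout hyp hfg.isInflation
    hpo).isDeflation⟩, hT₁, hjω⟩

theorem isCotorsionPair_of_isTilting (hS : S.IsExactStructure)
    (hW : WeaklyIdempotentComplete C) (hEP : S.HasEnoughProjectives) (hT : S.IsTilting T) :
    S.IsCotorsionPair (S.perp1 (S.Fac T)) (S.Fac T) := by
  have hrig := isTauRigid_of_isTilting hS hEP hT
  refine ⟨fun hZ i r hir Y hY => ext1Zero_of_section hS i r hir (hZ Y hY),
    fun hZ i r hir => mem_fac_of_isDeflation hS hZ (hS.isDeflation_of_comp_eq_id hW hir),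
    fun X hX Y hY => hX Y hY, fun X => ?_, fun X => ?_⟩
  · obtain ⟨P, p, hP, Y, y, hyp⟩ := hEP X
    obtain ⟨D₁, T₁, j, q, hD₁, hT₁, hjq⟩ := exists_isConflation_mem_fac_of_isTilting hS hEP hT Y
    obtain ⟨V, a, b, τ, hpo, hbτ, -⟩ := hS.exists_isPushout_isConflation hyp j
    obtain ⟨w, haw, -⟩ := hS.exists_isConflation_of_isPushout hjq hpo.flip
    exact ⟨D₁, V, b, τ, hD₁, fun Z hZ => ext1Zero_of_isConflation hS haw
      (ext1Zero_of_isProjObj hP Z) (hrig.2 T₁ hT₁ Z hZ), hbτ⟩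
  · obtain ⟨D₁, T₁, f, g, hD₁, hT₁, hfg⟩ := exists_isConflation_mem_fac_of_isTilting hS hEP hT X
    exact ⟨D₁, T₁, f, g, hD₁, hrig.2 T₁ hT₁, hfg⟩

theorem isTilting_inter_of_isCotorsionPair (hS : S.IsExactStructure)
    (hW : WeaklyIdempotentComplete C) {Cc D : Set C} (hCD : S.IsCotorsionPair Cc D)
    (hD : S.IsTorsionClass D) : S.IsTilting (Cc ∩ D) := by
  obtain rfl := perp1_eq_of_isCotorsionPair hCD
  obtain ⟨-, -, horth, -, hres⟩ := hCD
  have hsyz : ∀ {T K P : C} {i : K ⟶ P} {p : P ⟶ T}, T ∈ S.perp1 D → S.IsProjObj P →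
      S.IsConflation i p → ∀ Y, S.ext1Zero K Y := fun hT hP hip =>
    ext1Zero_syzygy_of_mem_perp1 hS hD.1 (fun X => by
      obtain ⟨D₁, Q, f, g, hD₁, -, hfg⟩ := hres X
      exact ⟨D₁, Q, f, g, hD₁, hfg⟩) hT hP hip
  obtain ⟨D₀, -, -, -, hD₀, -⟩ := hres 0
  refine ⟨additivelyClosed_perp1_inter hS hW hD (zero_mem_of_isTorsionClass hS hD hD₀),
    ?_, ?_, fun P hP => ?_⟩
  · rintro T₁ ⟨hT₁, -⟩ T₂ ⟨-, hT₂⟩ (_ | n)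
    · exact extSuccZero_zero_iff.2 (hT₁ T₂ hT₂)
    · exact extSuccZero_succ_iff.2 fun K P i p hP hip =>
        extSuccZero_of_forall_ext1Zero hS n (hsyz hT₁ hP hip) T₂
  · rintro T ⟨hT, -⟩ Y
    exact extSuccZero_succ_iff.2 fun K P i p hP hip => extSuccZero_zero_iff.2 (hsyz hT hP hip Y)
  · obtain ⟨D₁, C₁, f, g, hD₁, hC₁, hfg⟩ := hres P
    exact ⟨D₁, C₁, f, g, ⟨fun Y hY => ext1Zero_of_isConflation hS hfg
      (ext1Zero_of_isProjObj hP Y) (hC₁ Y hY), hD₁⟩, ⟨hC₁, hD.1 g hD₁ hfg.isDeflation⟩, hfg⟩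

end

end ConflationStruct

open ConflationStruct

/-- mutually inverse bijections between support τ-tilting subcategories
and τ-cotorsion pairs `(C, D)` with `D` a torsion class, restricting to bijections
between tilting subcategories and cotorsion pairs `(C, D)` with `D` a torsion class. -/
theorem bijection_support_tau_tilting_tau_cotorsion
    {C : Type u} [Category.{v} C] [Preadditive C] [HasZeroObject C] [HasBinaryBiproducts C]
    (S : ConflationStruct C) (hS : S.IsExactStructure) (hP : S.HasEnoughProjectives)
    (hWIC : WeaklyIdempotentComplete C) :
    (∀ T : Set C, S.IsSupportTauTilting T →
        S.IsTauCotorsionPair (S.perp1 (S.Fac T)) (S.Fac T) ∧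
        S.IsTorsionClass (S.Fac T) ∧
        S.perp1 (S.Fac T) ∩ S.Fac T = T) ∧
    (∀ Cc D : Set C, S.IsTauCotorsionPair Cc D → S.IsTorsionClass D →
        S.IsSupportTauTilting (Cc ∩ D) ∧
        S.Fac (Cc ∩ D) = D ∧ S.perp1 (S.Fac (Cc ∩ D)) = Cc) ∧
    (∀ T : Set C, S.IsTilting T →
        S.IsCotorsionPair (S.perp1 (S.Fac T)) (S.Fac T) ∧
        S.IsTorsionClass (S.Fac T) ∧ S.perp1 (S.Fac T) ∩ S.Fac T = T) ∧
    (∀ Cc D : Set C, S.IsCotorsionPair Cc D → S.IsTorsionClass D →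
        S.IsTilting (Cc ∩ D) ∧ S.Fac (Cc ∩ D) = D ∧ S.perp1 (S.Fac (Cc ∩ D)) = Cc) := by
  refine ⟨fun T hT => ?_, fun Cc D hCD hD => ?_, fun T hT => ?_, fun Cc D hCD hD => ?_⟩
  · exact ⟨isTauCotorsionPair_of_isSupportTauTilting hS hT, isTorsionClass_fac hS hT.1,
      perp1_fac_inter_eq hS hWIC hP hT⟩
  · have hFac := fac_inter_eq_of_isTauCotorsionPair hS hWIC hP hCD hD
    exact ⟨isSupportTauTilting_inter_of_isTauCotorsionPair hS hWIC hP hCD hD, hFac,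
      by rw [hFac, hCD.1]⟩
  · have hT' := isSupportTauTilting_of_isTilting hS hP hT
    exact ⟨isCotorsionPair_of_isTilting hS hWIC hP hT, isTorsionClass_fac hS hT'.1,
      perp1_fac_inter_eq hS hWIC hP hT'⟩
  · have hFac := fac_inter_eq_of_isCotorsionPair hCD hD
    exact ⟨isTilting_inter_of_isCotorsionPair hS hWIC hCD hD, hFac,
      by rw [hFac, perp1_eq_of_isCotorsionPair hCD]⟩

end TauTilting
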